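/- arXiv:2403.19249 — 8 statements merged into one kernel-verified Lean document; each statement's English description precedes it below -/
import Mathlib

section
/- Let a₁,…,aₙ be n linearly independent vectors in ℝⁿ and let x = Σᵢ λᵢ aᵢ. Then the set {x, a₁,…,aₙ} is not strictly separated from 0 by any hyperplane if and only if all coefficients λᵢ are nonpositive. -/
open scoped RealInnerProductSpace
open Finset

noncomputable section

/-- The positive (conical) hull of a set of vectors: all nonnegative
linear combinations of finitely many elements of `V`. -/
def posHull {E : Type*} [AddCommGroup E] [Module ℝ E] (V : Set E) : Set E :=
  {y | ∃ (t : Finset E) (c : E → ℝ), ↑t ⊆ V ∧ (∀ z ∈ t, 0 ≤ c z) ∧ ∑ z ∈ t, c z • z = y}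

/-- A set of vectors is in conical position if it is strictly separated from `0`
and no element lies in the positive hull of the others. -/
def InConicalPos {n : ℕ} (S : Set (EuclideanSpace ℝ (Fin n))) : Prop :=
  (∃ v : EuclideanSpace ℝ (Fin n), ∀ s ∈ S, 0 < ⟪v, s⟫) ∧
    ∀ s ∈ S, s ∉ posHull (S \ {s})

/-- Dual vectors: given a linearly independent family of `n` vectors in `ℝⁿ`
and prescribed values `c`, there is `v` with `⟪v, a i⟫ = c i` for all `i`. -/
lemma exists_dual_vec0 {n : ℕ} (a : Fin n → EuclideanSpace ℝ (Fin n))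
    (ha : LinearIndependent ℝ a) (c : Fin n → ℝ) :
    ∃ v : EuclideanSpace ℝ (Fin n), ∀ i, ⟪v, a i⟫ = c i := by
  rcases Nat.eq_zero_or_pos n with hn | hn
  · subst hn; exact ⟨0, fun i => i.elim0⟩
  have : Nonempty (Fin n) := Fin.pos_iff_nonempty.mp hn
  have hcard : Fintype.card (Fin n) = Module.finrank ℝ (EuclideanSpace ℝ (Fin n)) := by
    simp
  let B := basisOfLinearIndependentOfCardEqFinrank ha hcard
  have hB : ∀ i, B i = a i := fun i =>
    congrFun (coe_basisOfLinearIndependentOfCardEqFinrank ha hcard) i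
  let f : EuclideanSpace ℝ (Fin n) →ₗ[ℝ] ℝ := ∑ k, c k • (B.coord k)
  let fc : EuclideanSpace ℝ (Fin n) →L[ℝ] ℝ := LinearMap.toContinuousLinearMap f
  refine ⟨(InnerProductSpace.toDual ℝ _).symm fc, fun i => ?_⟩
  rw [InnerProductSpace.toDual_symm_apply]
  show f (a i) = c i
  rw [← hB i]
  simp [f, LinearMap.sum_apply, Module.Basis.coord_apply, Module.Basis.repr_self,
    Finsupp.single_apply]

/-- Observation 4(i): with `a` a linearly independent family of `n` vectors in `ℝⁿ`
and `x = ∑ λᵢ aᵢ`, the set `{x, a₁, …, aₙ}` is not strictly separated from `0`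
iff all coefficients `λᵢ` are nonpositive. -/
theorem stmt0 {n : ℕ} (a : Fin n → EuclideanSpace ℝ (Fin n))
    (ha : LinearIndependent ℝ a) (lam : Fin n → ℝ)
    (x : EuclideanSpace ℝ (Fin n)) (hx : x = ∑ i, lam i • a i) :
    (¬ ∃ v : EuclideanSpace ℝ (Fin n),
        0 < ⟪v, x⟫ ∧ ∀ i, 0 < ⟪v, a i⟫) ↔ ∀ i, lam i ≤ 0 := by
  constructor
  · intro hno
    by_contra hcon
    push_neg at hcon
    obtain ⟨j, hj⟩ := hcon
    apply hno
    set S : ℝ := ∑ i, |lam i| with hS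
    have hS0 : 0 ≤ S := Finset.sum_nonneg fun i _ => abs_nonneg _
    set δ : ℝ := lam j / (1 + S) with hδ
    have hδ0 : 0 < δ := div_pos hj (by linarith)
    set c : Fin n → ℝ := fun i => if i = j then 1 else δ with hc
    obtain ⟨v, hv⟩ := exists_dual_vec0 a ha c
    have hvx : ⟪v, x⟫ = ∑ i, lam i * c i := by
      rw [hx, inner_sum]
      exact Finset.sum_congr rfl fun i _ => by
        rw [real_inner_smul_right, hv i]
    refine ⟨v, ?_, fun i => by rw [hv i]; dsimp [c]; split <;> [norm_num; exact hδ0]⟩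
    rw [hvx]
    have hsplit : ∑ i, lam i * c i = lam j + ∑ i ∈ univ.erase j, lam i * δ := by
      rw [← Finset.add_sum_erase _ _ (Finset.mem_univ j)]
      simp only [c, if_pos rfl, mul_one]
      congr 1
      exact Finset.sum_congr rfl fun i hi => by
        rw [if_neg (Finset.ne_of_mem_erase hi)]
    rw [hsplit]
    have hbound : |∑ i ∈ univ.erase j, lam i| ≤ S := by
      calc |∑ i ∈ univ.erase j, lam i| ≤ ∑ i ∈ univ.erase j, |lam i| :=
            Finset.abs_sum_le_sum_abs _ _
        _ ≤ S := Finset.sum_le_sum_of_subset_of_nonneg (Finset.erase_subset _ _)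
            (fun i _ _ => abs_nonneg _)
    have hsum : ∑ i ∈ univ.erase j, lam i * δ = (∑ i ∈ univ.erase j, lam i) * δ := by
      rw [Finset.sum_mul]
    rw [hsum]
    have h1 : -(S * δ) ≤ (∑ i ∈ univ.erase j, lam i) * δ := by
      have := neg_abs_le (∑ i ∈ univ.erase j, lam i)
      nlinarith [hδ0.le]
    have h2 : S * δ < lam j := by
      rw [hδ, mul_div_assoc', div_lt_iff₀ (by linarith : (0:ℝ) < 1 + S)]
      nlinarith
    linarith
  · rintro hle ⟨v, hvx, hva⟩
    have : ⟪v, x⟫ ≤ 0 := by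
      rw [hx, inner_sum]
      apply Finset.sum_nonpos
      intro i _
      rw [real_inner_smul_right]
      exact mul_nonpos_of_nonpos_of_nonneg (hle i) (hva i).le
    linarith
end
end

section
/- Let a₁,…,aₙ be n linearly independent vectors in ℝⁿ and let x = Σᵢ λᵢ aᵢ. Then one of the points x, a₁,…,aₙ lies in the positive hull (conical hull) of the others if and only if either (i) all λᵢ are nonnegative, or (ii) there is an index i with λᵢ > 0 and λⱼ ≤ 0 for all j ≠ i. -/
open scoped RealInnerProductSpace
open Finset

noncomputable section

lemma posHull_zero {E : Type*} [AddCommGroup E] [Module ℝ E] (V : Set E) :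
    (0 : E) ∈ posHull V := ⟨∅, fun _ => 0, by simp, by simp, by simp⟩

lemma posHull_smul_mem {E : Type*} [AddCommGroup E] [Module ℝ E] {V : Set E} {z : E} {r : ℝ}
    (hr : 0 ≤ r) (hz : z ∈ V) : r • z ∈ posHull V :=
  ⟨{z}, fun _ => r, by simpa, fun _ _ => hr, by simp⟩

lemma posHull_add {E : Type*} [AddCommGroup E] [Module ℝ E] {V : Set E} {y₁ y₂ : E}
    (h₁ : y₁ ∈ posHull V) (h₂ : y₂ ∈ posHull V) : y₁ + y₂ ∈ posHull V := by
  classical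
  obtain ⟨t₁, c₁, hs₁, hc₁, hsum₁⟩ := h₁
  obtain ⟨t₂, c₂, hs₂, hc₂, hsum₂⟩ := h₂
  refine ⟨t₁ ∪ t₂, fun z => (if z ∈ t₁ then c₁ z else 0) + (if z ∈ t₂ then c₂ z else 0),
    ?_, ?_, ?_⟩
  · intro z hz
    rcases Finset.mem_union.mp (by exact_mod_cast hz) with h | h
    exacts [hs₁ h, hs₂ h]
  · intro z _
    have : ∀ (t : Finset E) (c : E → ℝ), (∀ w ∈ t, 0 ≤ c w) → 0 ≤ (if z ∈ t then c z else 0) := by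
      intro t c hc; split <;> [exact hc z ‹_›; rfl]
    exact add_nonneg (this t₁ c₁ hc₁) (this t₂ c₂ hc₂)
  · have e : ∀ (t : Finset E) (c : E → ℝ) (hsub : t ⊆ t₁ ∪ t₂),
        ∑ z ∈ t₁ ∪ t₂, (if z ∈ t then c z else 0) • z = ∑ z ∈ t, c z • z := by
      intro t c hsub
      rw [← Finset.sum_subset hsub (fun z _ hz => by simp [hz])]
      exact Finset.sum_congr rfl fun z hz => by simp [hz]
    simp only [add_smul, Finset.sum_add_distrib,
      e t₁ c₁ Finset.subset_union_left, e t₂ c₂ Finset.subset_union_right, hsum₁, hsum₂]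

lemma posHull_sum {E ι : Type*} [AddCommGroup E] [Module ℝ E] {V : Set E}
    {s : Finset ι} {f : ι → E} (h : ∀ i ∈ s, f i ∈ posHull V) :
    ∑ i ∈ s, f i ∈ posHull V :=
  Finset.sum_induction f (· ∈ posHull V) (fun _ _ => posHull_add) (posHull_zero V) h

/-- Observation 4(ii): one of the points `x, a₁, …, aₙ` lies in the positive hull of
the others iff either all `λᵢ` are nonnegative, or some `λᵢ > 0` with all other
`λⱼ ≤ 0`. -/
theorem stmt1 {n : ℕ} (a : Fin n → EuclideanSpace ℝ (Fin n))
    (ha : LinearIndependent ℝ a) (lam : Fin n → ℝ)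
    (x : EuclideanSpace ℝ (Fin n)) (hx : x = ∑ i, lam i • a i) :
    (x ∈ posHull (Set.range a) ∨
      ∃ i, a i ∈ posHull ({x} ∪ (Set.range a \ {a i}))) ↔
    ((∀ i, 0 ≤ lam i) ∨ ∃ i, 0 < lam i ∧ ∀ j, j ≠ i → lam j ≤ 0) := by
  classical
  rcases Nat.eq_zero_or_pos n with rfl | hn
  · constructor
    · intro _
      left
      exact fun i => i.elim0
    · intro _
      left
      have hx0 : x = 0 := by simp [hx]
      rw [hx0]
      exact posHull_zero _
  haveI : Nonempty (Fin n) := Fin.pos_iff_nonempty.mp hn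
  have hcard : Fintype.card (Fin n) = Module.finrank ℝ (EuclideanSpace ℝ (Fin n)) := by
    simp [finrank_euclideanSpace]
  let b := basisOfLinearIndependentOfCardEqFinrank ha hcard
  have hb : ⇑b = a := coe_basisOfLinearIndependentOfCardEqFinrank ha hcard
  have hinj : Function.Injective a := ha.injective
  have hra : ∀ k j, b.repr (a k) j = if k = j then 1 else 0 := by
    intro k j
    rw [← hb, b.repr_self]
    simp [Finsupp.single_apply]
  have hrx : ∀ j, b.repr x j = lam j := by
    intro j
    rw [hx]
    simp [map_sum, map_smul, Finsupp.coe_finset_sum, Finset.sum_apply, hra, mul_ite]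
  have hrepr_sum : ∀ (t : Finset (EuclideanSpace ℝ (Fin n))) (c : EuclideanSpace ℝ (Fin n) → ℝ)
      (j : Fin n), b.repr (∑ z ∈ t, c z • z) j = ∑ z ∈ t, c z * b.repr z j := by
    intro t c j
    simp [map_sum, map_smul, Finsupp.coe_finset_sum, Finset.sum_apply]
  constructor
  · rintro (⟨t, c, hsub, hc, hsum⟩ | ⟨i, t, c, hsub, hc, hsum⟩)
    · left
      intro j
      have h1 : lam j = ∑ z ∈ t, c z * b.repr z j := by
        rw [← hrx j, ← hsum, hrepr_sum]
      rw [h1]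
      refine Finset.sum_nonneg fun z hz => ?_
      obtain ⟨k, rfl⟩ := hsub hz
      rw [hra]
      exact mul_nonneg (hc _ hz) (by positivity)
    · right
      have heq : ∀ j, b.repr (a i) j = ∑ z ∈ t, c z * b.repr z j := by
        intro j
        rw [← hsum, hrepr_sum]
      have hzk : ∀ z ∈ t, z ≠ x → ∃ k, k ≠ i ∧ z = a k := by
        intro z hz hne
        rcases hsub hz with h | ⟨⟨k, rfl⟩, hk⟩
        · exact absurd h hne
        · exact ⟨k, fun h => hk (by simp [h]), rfl⟩
      have hzi : ∀ z ∈ t, z ≠ x → c z * b.repr z i = 0 := by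
        intro z hz hne
        obtain ⟨k, hk, rfl⟩ := hzk z hz hne
        rw [hra, if_neg hk, mul_zero]
      have h1 : (1 : ℝ) = ∑ z ∈ t, c z * b.repr z i := by
        have := heq i
        rwa [hra, if_pos rfl] at this
      by_cases hxt : x ∈ t
      · have h2 : c x * lam i = 1 := by
          rw [← hrx i]
          exact (Finset.sum_eq_single_of_mem x hxt (fun z hz hne => hzi z hz hne)).symm.trans
            h1.symm
        have hcx : 0 < c x := by
          rcases (hc x hxt).lt_or_eq with h | h
          · exact h
          · rw [← h, zero_mul] at h2
            norm_num at h2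
        have hli : 0 < lam i := by nlinarith
        refine ⟨i, hli, fun j hj => ?_⟩
        have h3 : (0 : ℝ) = ∑ z ∈ t, c z * b.repr z j := by
          have := heq j
          rwa [hra, if_neg (fun h => hj h.symm)] at this
        rw [← Finset.add_sum_erase _ _ hxt] at h3
        have hrest : 0 ≤ ∑ z ∈ t.erase x, c z * b.repr z j := by
          refine Finset.sum_nonneg fun z hz => ?_
          obtain ⟨k, _, rfl⟩ := hzk z (Finset.mem_of_mem_erase hz) (Finset.ne_of_mem_erase hz)
          rw [hra]
          exact mul_nonneg (hc _ (Finset.mem_of_mem_erase hz)) (by positivity)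
        have h4 : c x * lam j ≤ 0 := by
          rw [← hrx j]
          linarith
        nlinarith
      · exfalso
        have : (1 : ℝ) = 0 := h1.trans (Finset.sum_eq_zero fun z hz =>
          hzi z hz (fun h => hxt (h ▸ hz)))
        norm_num at this
  · rintro (h | ⟨i, hpos, hneg⟩)
    · left
      rw [hx]
      exact posHull_sum fun i _ => posHull_smul_mem (h i) (Set.mem_range_self i)
    · right
      refine ⟨i, ?_⟩
      have key : a i = (lam i)⁻¹ • x + ∑ j ∈ Finset.univ.erase i, (-(lam j) * (lam i)⁻¹) • a j := by
        rw [hx, Finset.smul_sum, ← Finset.add_sum_erase _ _ (Finset.mem_univ i), add_assoc,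
          ← Finset.sum_add_distrib]
        have hz : ∀ j, (lam i)⁻¹ • lam j • a j + (-(lam j) * (lam i)⁻¹) • a j = 0 := by
          intro j
          module
        rw [Finset.sum_congr rfl fun j _ => hz j]
        simp [smul_smul, inv_mul_cancel₀ hpos.ne']
      have hmem : (lam i)⁻¹ • x + ∑ j ∈ Finset.univ.erase i, (-(lam j) * (lam i)⁻¹) • a j ∈
          posHull ({x} ∪ (Set.range a \ {a i})) := by
        refine posHull_add (posHull_smul_mem (by positivity) (Set.mem_union_left _ rfl))
          (posHull_sum fun j hj => posHull_smul_mem ?_ ?_)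
        · have h1 := hneg j (Finset.ne_of_mem_erase hj)
          have h2 : 0 ≤ -(lam j) := by linarith
          positivity
        · exact Set.mem_union_right _ ⟨Set.mem_range_self j, fun h =>
            Finset.ne_of_mem_erase hj (hinj h)⟩
      rwa [← key] at hmem
end
end

section
/- Let X ⊆ ℝⁿ be a finite set such that 0 lies in the interior of the convex hull of X, and suppose every subset of X of size n+1 fails to be in conical position. Then there exists a subset B = {b₁,…,bₙ} ⊆ X of n linearly independent vectors such that every x ∈ X, when written as x = Σᵢ λᵢ bᵢ, has either all λᵢ ≥ 0 or all λᵢ ≤ 0. -/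
open scoped RealInnerProductSpace
open Finset

noncomputable section

section Helpers

variable {E : Type*} [AddCommGroup E] [Module ℝ E]

lemma self_mem_posHull {V : Set E} {z : E} (hz : z ∈ V) : z ∈ posHull V := by
  classical
  exact ⟨{z}, fun _ => 1, by simpa using hz, fun _ _ => zero_le_one, by simp⟩

lemma sum_smul_mem_posHull {ι : Type*} [Fintype ι] (b : ι → E) (μ : ι → ℝ)
    (hμ : ∀ i, 0 ≤ μ i) : (∑ i, μ i • b i) ∈ posHull (Set.range b) := by
  classical
  refine ⟨Finset.image b Finset.univ,
    fun z => ∑ i ∈ Finset.univ.filter (fun i => b i = z), μ i, ?_, ?_, ?_⟩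
  · intro z hz
    simp only [Finset.coe_image, Finset.coe_univ, Set.image_univ] at hz
    exact hz
  · intro z _
    exact Finset.sum_nonneg fun i _ => hμ i
  · have h1 : ∀ z ∈ Finset.image b Finset.univ,
        (∑ i ∈ Finset.univ.filter (fun i => b i = z), μ i) • z
          = ∑ i ∈ Finset.univ.filter (fun i => b i = z), μ i • b i := by
      intro z _
      rw [Finset.sum_smul]
      refine Finset.sum_congr rfl fun i hi => ?_
      rw [(Finset.mem_filter.mp hi).2]
    rw [Finset.sum_congr rfl h1]
    exact Finset.sum_fiberwise_of_maps_to
      (fun i _ => Finset.mem_image_of_mem b (Finset.mem_univ i)) _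

lemma exists_rep_of_mem_posHull {ι : Type*} [Fintype ι] {b : ι → E}
    (hb : Function.Injective b) {y : E} (hy : y ∈ posHull (Set.range b)) :
    ∃ μ : ι → ℝ, (∀ i, 0 ≤ μ i) ∧ y = ∑ i, μ i • b i := by
  classical
  obtain ⟨t, c, htV, hc, hsum⟩ := hy
  refine ⟨fun i => if b i ∈ t then c (b i) else 0, fun i => ?_, ?_⟩
  · by_cases h : b i ∈ t
    · simpa [h] using hc _ h
    · simp [h]
  · rw [← hsum]
    have h1 : ∑ i, (if b i ∈ t then c (b i) else 0) • b i
        = ∑ i ∈ Finset.univ.filter (fun i => b i ∈ t), c (b i) • b i := by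
      rw [Finset.sum_filter]
      refine Finset.sum_congr rfl fun i _ => ?_
      by_cases h : b i ∈ t <;> simp [h]
    have h2 : Finset.image b (Finset.univ.filter (fun i => b i ∈ t)) = t := by
      ext z
      simp only [Finset.mem_image, Finset.mem_filter, Finset.mem_univ, true_and]
      constructor
      · rintro ⟨i, hi, rfl⟩; exact hi
      · intro hz
        obtain ⟨i, rfl⟩ := htV hz
        exact ⟨i, hz, rfl⟩
    have h3 : ∑ z ∈ Finset.image b (Finset.univ.filter fun i => b i ∈ t), c z • z
        = ∑ i ∈ Finset.univ.filter (fun i => b i ∈ t), c (b i) • b i :=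
      Finset.sum_image (fun i _ j _ h => hb h)
    rw [h1, ← h3, h2]

lemma rep_unique {ι : Type*} [Fintype ι] {b : ι → E} (hb : LinearIndependent ℝ b)
    {lam mu : ι → ℝ} (h : ∑ i, lam i • b i = ∑ i, mu i • b i) : lam = mu := by
  have h0 : ∑ i, (lam i - mu i) • b i = 0 := by
    simp only [sub_smul, Finset.sum_sub_distrib, h, sub_self]
  have hz := Fintype.linearIndependent_iff.mp hb _ h0
  funext i
  have := sub_eq_zero.mp (hz i)
  linarith

lemma update_comb {ι : Type*} [Fintype ι] [DecidableEq ι] (g : ι → E) (x : E) (m : ι)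
    (lam μ : ι → ℝ) (hx : x = ∑ i, lam i • g i) :
    ∑ j, μ j • Function.update g m x j
      = ∑ j, ((μ m * lam j) + (if j = m then 0 else μ j)) • g j := by
  have hL : ∑ j, μ j • Function.update g m x j
      = μ m • x + ∑ j ∈ Finset.univ.erase m, μ j • g j := by
    rw [← Finset.add_sum_erase Finset.univ (fun j => μ j • Function.update g m x j)
      (Finset.mem_univ m)]
    congr 1
    · rw [Function.update_self]
    · refine Finset.sum_congr rfl fun j hj => ?_
      rw [Function.update_of_ne (Finset.ne_of_mem_erase hj)]
  have hR : ∑ j, ((μ m * lam j) + (if j = m then 0 else μ j)) • g j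
      = (∑ j, (μ m * lam j) • g j) + ∑ j, (if j = m then (0:ℝ) else μ j) • g j := by
    simp only [add_smul, Finset.sum_add_distrib]
  rw [hL, hR, hx, Finset.smul_sum]
  congr 1
  · refine Finset.sum_congr rfl fun j _ => ?_
    rw [smul_smul]
  · rw [← Finset.sum_erase Finset.univ
      (f := fun j => (if j = m then (0:ℝ) else μ j) • g j) (a := m) (by simp)]
    refine Finset.sum_congr rfl fun j hj => ?_
    rw [if_neg (Finset.ne_of_mem_erase hj)]

end Helpers

/-- If `0 ∈ int conv X` and no `n+1` points of `X` are in conical position, then there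
is a linearly independent subset `b₁, …, bₙ` of `X` such that every `x ∈ X` has all
coordinates (in this basis) nonnegative or all nonpositive. -/
theorem stmt3 {n : ℕ} (X : Finset (EuclideanSpace ℝ (Fin n)))
    (h0 : (0 : EuclideanSpace ℝ (Fin n)) ∈ interior (convexHull ℝ (X : Set (EuclideanSpace ℝ (Fin n)))))
    (hcon : ∀ S : Finset (EuclideanSpace ℝ (Fin n)),
      S ⊆ X → S.card = n + 1 → ¬ InConicalPos (S : Set (EuclideanSpace ℝ (Fin n)))) :
    ∃ b : Fin n → EuclideanSpace ℝ (Fin n),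
      (∀ i, b i ∈ X) ∧ LinearIndependent ℝ b ∧
      ∀ x ∈ X, ∀ lam : Fin n → ℝ, x = ∑ i, lam i • b i →
        (∀ i, 0 ≤ lam i) ∨ (∀ i, lam i ≤ 0) := by
  classical
  -- Step 1 : X spans the whole space
  have hspan : Submodule.span ℝ (X : Set (EuclideanSpace ℝ (Fin n))) = ⊤ := by
    refine Submodule.eq_top_of_nonempty_interior' _ ⟨0, ?_⟩
    have hsub : convexHull ℝ (X : Set (EuclideanSpace ℝ (Fin n)))
        ⊆ (Submodule.span ℝ (X : Set (EuclideanSpace ℝ (Fin n))) : Set _) :=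
      convexHull_min Submodule.subset_span (Submodule.span ℝ _).convex
    exact interior_mono hsub h0
  -- Step 2 : an initial linearly independent family inside X
  obtain ⟨s, hsX, hs_span, hs_li⟩ :=
    exists_linearIndependent ℝ (X : Set (EuclideanSpace ℝ (Fin n)))
  have hsfin : s.Finite := X.finite_toSet.subset hsX
  haveI := hsfin.fintype
  have hstop : Submodule.span ℝ s = ⊤ := by rw [hs_span, hspan]
  let B0 : Module.Basis s ℝ (EuclideanSpace ℝ (Fin n)) :=
    Module.Basis.mk hs_li (by rw [Subtype.range_coe]; exact hstop.ge)
  have hcards : Fintype.card s = n := by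
    have := Module.finrank_eq_card_basis B0
    rw [finrank_euclideanSpace_fin] at this
    omega
  let e : s ≃ Fin n := Fintype.equivFinOfCardEq hcards
  let g0 : Fin n → EuclideanSpace ℝ (Fin n) := fun i => (e.symm i : EuclideanSpace ℝ (Fin n))
  have hg0li : LinearIndependent ℝ g0 := hs_li.comp e.symm e.symm.injective
  -- Step 3 : pick a basis from X whose cone is maximal
  let F : Set (Fin n → EuclideanSpace ℝ (Fin n)) :=
    {g | (∀ i, g i ∈ X) ∧ LinearIndependent ℝ g}
  have hFfin : F.Finite := by
    refine (Set.Finite.pi fun _ : Fin n => X.finite_toSet).subset ?_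
    intro g hg
    exact fun i _ => hg.1 i
  have hFne : F.Nonempty :=
    ⟨g0, fun i => Finset.mem_coe.mp (hsX (e.symm i).2), hg0li⟩
  obtain ⟨g, hgF, hgmax⟩ :=
    Set.Finite.exists_maximalFor (fun g => posHull (Set.range g)) F hFfin hFne
  have hg : LinearIndependent ℝ g := hgF.2
  have hginj : Function.Injective g := hg.injective
  refine ⟨g, hgF.1, hg, ?_⟩
  intro x hxX lam hxrep
  by_contra hcontra
  push_neg at hcontra
  obtain ⟨⟨j, hj⟩, ⟨k, hk⟩⟩ := hcontra
  -- hj : lam j < 0, hk : 0 < lam k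
  have hxne : ∀ i, x ≠ g i := by
    intro i hxi
    have hlam : lam = fun j' => if j' = i then 1 else 0 := by
      apply rep_unique hg
      rw [← hxrep, hxi]
      simp
    have hj' := hj
    rw [hlam] at hj'
    rcases eq_or_ne j i with h | h <;> norm_num [h] at hj'
  by_cases hP : ∃ p, p ≠ k ∧ 0 < lam p
  · -- at least two positive coordinates : contradiction with `hcon`
    obtain ⟨p, hpk, hp⟩ := hP
    set S : Finset (EuclideanSpace ℝ (Fin n)) := insert x (Finset.image g Finset.univ) with hS
    have hxnotmem : x ∉ Finset.image g Finset.univ := by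
      simp only [Finset.mem_image]
      rintro ⟨i, -, hi⟩
      exact hxne i hi.symm
    have hsub : S ⊆ X := by
      intro z hz
      rcases Finset.mem_insert.mp hz with rfl | hz
      · exact hxX
      · obtain ⟨i, -, rfl⟩ := Finset.mem_image.mp hz
        exact hgF.1 i
    have hcard : S.card = n + 1 := by
      rw [hS, Finset.card_insert_of_notMem hxnotmem,
        Finset.card_image_of_injective _ hginj]
      simp
    have hSset : (S : Set (EuclideanSpace ℝ (Fin n))) = insert x (Set.range g) := by
      rw [hS]
      push_cast
      rw [Set.image_univ]
    refine hcon S hsub hcard ⟨?_, ?_⟩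
    · -- strict separation from the origin
      haveI : Nonempty (Fin n) := ⟨k⟩
      have hcardn : Fintype.card (Fin n)
          = Module.finrank ℝ (EuclideanSpace ℝ (Fin n)) := by
        rw [finrank_euclideanSpace_fin, Fintype.card_fin]
      set Bb : Module.Basis (Fin n) ℝ (EuclideanSpace ℝ (Fin n)) :=
        basisOfLinearIndependentOfCardEqFinrank hg hcardn with hBb
      set Srest : ℝ := ∑ i ∈ Finset.univ.erase k, lam i with hSrest
      have hlamk : lam k ≠ 0 := ne_of_gt hk
      set T : ℝ := (1 + |Srest|) / lam k with hT
      have hT0 : 0 < T := div_pos (by positivity) hk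
      set t : Fin n → ℝ := fun i => if i = k then T else 1 with ht
      have ht0 : ∀ i, 0 < t i := by
        intro i
        rw [ht]
        by_cases h : i = k <;> simp [h, hT0]
      set f : EuclideanSpace ℝ (Fin n) →ₗ[ℝ] ℝ := ∑ i, t i • Bb.coord i with hf
      have hfg : ∀ i, f (g i) = t i := by
        intro i
        have hcoord : ∀ jj, Bb.coord jj (g i) = if i = jj then 1 else 0 := by
          intro jj
          have hgB : g i = Bb i := by
            rw [hBb]
            exact (congrFun (coe_basisOfLinearIndependentOfCardEqFinrank hg hcardn) i).symm
          rw [hgB, Module.Basis.coord_apply, Module.Basis.repr_self, Finsupp.single_apply]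
        rw [hf]
        simp only [LinearMap.coe_sum, Finset.sum_apply, LinearMap.smul_apply,
          smul_eq_mul, hcoord]
        simp
      set v : EuclideanSpace ℝ (Fin n) :=
        (InnerProductSpace.toDual ℝ (EuclideanSpace ℝ (Fin n))).symm
          (LinearMap.toContinuousLinearMap f) with hv'
      have hv : ∀ y, ⟪v, y⟫ = f y := by
        intro y
        rw [hv', InnerProductSpace.toDual_symm_apply]
        simp
      have hfx : f x = ∑ i, lam i * t i := by
        rw [hxrep, map_sum]
        refine Finset.sum_congr rfl fun i _ => ?_
        rw [map_smul, hfg, smul_eq_mul]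
      have hsum : ∑ i, lam i * t i = 1 + |Srest| + Srest := by
        rw [← Finset.add_sum_erase Finset.univ (fun i => lam i * t i) (Finset.mem_univ k)]
        have hA : lam k * t k = 1 + |Srest| := by
          rw [ht]
          simp only [if_pos rfl, ↓reduceIte]
          rw [hT]
          field_simp
        have hB : ∑ i ∈ Finset.univ.erase k, lam i * t i = Srest := by
          rw [hSrest]
          refine Finset.sum_congr rfl fun i hi => ?_
          rw [ht]
          simp [Finset.ne_of_mem_erase hi]
        rw [hA, hB]
      refine ⟨v, ?_⟩
      intro z hz
      rw [hSset] at hz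
      rcases Set.mem_insert_iff.mp hz with rfl | ⟨i, rfl⟩
      · rw [hv, hfx, hsum]
        have h3 := neg_abs_le Srest
        linarith
      · rw [hv, hfg]
        exact ht0 i
    · -- no element lies in the positive hull of the others
      intro z hz
      rw [hSset] at hz ⊢
      rcases Set.mem_insert_iff.mp hz with rfl | hzr
      · -- the point x itself
        have hset : insert z (Set.range g) \ {z} = Set.range g :=
          Set.insert_diff_self_of_notMem (by rintro ⟨i, rfl⟩; exact hxne i rfl)
        rw [hset]
        intro hmem
        obtain ⟨μ, hμ0, hμ⟩ := exists_rep_of_mem_posHull hginj hmem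
        have hlam : lam = μ := rep_unique hg (by rw [← hxrep]; exact hμ)
        rw [hlam] at hj
        exact absurd (hμ0 j) (not_le.mpr hj)
      · -- a basis vector g m
        obtain ⟨m, rfl⟩ := hzr
        have hxm : x ≠ g m := hxne m
        have hset : insert x (Set.range g) \ {g m}
            = Set.range (Function.update g m x) := by
          ext z
          simp only [Set.mem_diff, Set.mem_insert_iff, Set.mem_singleton_iff, Set.mem_range]
          constructor
          · rintro ⟨rfl | ⟨i, rfl⟩, hne⟩
            · exact ⟨m, by simp⟩
            · have him : i ≠ m := fun h => hne (by rw [h])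
              exact ⟨i, Function.update_of_ne him _ _⟩
          · rintro ⟨i, rfl⟩
            rcases eq_or_ne i m with rfl | him
            · rw [Function.update_self]
              exact ⟨Or.inl rfl, hxm⟩
            · rw [Function.update_of_ne him]
              exact ⟨Or.inr ⟨i, rfl⟩, fun h => him (hginj h)⟩
        rw [hset]
        intro hmem
        have hb'inj : Function.Injective (Function.update g m x) := by
          intro a b hab
          rcases eq_or_ne a m with ha | ha
          · rcases eq_or_ne b m with hb | hb
            · rw [ha, hb]
            · rw [ha, Function.update_self, Function.update_of_ne hb] at hab
              exact absurd hab (hxne b)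
          · rcases eq_or_ne b m with hb | hb
            · rw [hb, Function.update_self, Function.update_of_ne ha] at hab
              exact absurd hab.symm (hxne a)
            · rw [Function.update_of_ne ha, Function.update_of_ne hb] at hab
              exact hginj hab
        obtain ⟨μ, hμ0, hμ⟩ := exists_rep_of_mem_posHull hb'inj hmem
        rw [update_comb g x m lam μ hxrep] at hμ
        have hco : (fun j' => if j' = m then (1:ℝ) else 0)
            = fun j' => (μ m * lam j') + (if j' = m then 0 else μ j') := by
          apply rep_unique hg
          rw [← hμ]
          simp
        have h1 : (1:ℝ) = μ m * lam m := by
          simpa using congrFun hco m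
        obtain ⟨q, hqm, hq0⟩ : ∃ q, q ≠ m ∧ 0 < lam q := by
          rcases eq_or_ne k m with rfl | hkm
          · exact ⟨p, hpk, hp⟩
          · exact ⟨k, hkm, hk⟩
        have h2 : (0:ℝ) = μ m * lam q + μ q := by
          have := congrFun hco q
          rwa [if_neg hqm, if_neg hqm] at this
        have hμm : 0 < μ m := by
          rcases (hμ0 m).lt_or_eq with h | h
          · exact h
          · rw [← h, zero_mul] at h1
            norm_num at h1
        nlinarith [hμ0 q, mul_pos hμm hq0]
  · -- exactly one positive coordinate : exchange argument
    push_neg at hP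
    have hneg : ∀ i, i ≠ k → lam i ≤ 0 := fun i hi => hP i hi
    have hlamk : lam k ≠ 0 := ne_of_gt hk
    set b' : Fin n → EuclideanSpace ℝ (Fin n) := Function.update g k x with hb'def
    have hb'X : ∀ i, b' i ∈ X := by
      intro i
      rcases eq_or_ne i k with hik | h
      · rw [hik, hb'def, Function.update_self]
        exact hxX
      · rw [hb'def, Function.update_of_ne h]
        exact hgF.1 i
    have hb'li : LinearIndependent ℝ b' := by
      rw [Fintype.linearIndependent_iff]
      intro c hc
      rw [hb'def, update_comb g x k lam c hxrep] at hc
      have hall := Fintype.linearIndependent_iff.mp hg _ hc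
      have hck : c k = 0 := by
        have hkk := hall k
        rw [if_pos rfl, add_zero] at hkk
        rcases mul_eq_zero.mp hkk with h | h
        · exact h
        · exact absurd h hlamk
      intro i
      rcases eq_or_ne i k with hik | h
      · rw [hik]; exact hck
      · have hii := hall i
        rwa [if_neg h, hck, zero_mul, zero_add] at hii
    have hb'inj : Function.Injective b' := hb'li.injective
    have hb'F : b' ∈ F := ⟨hb'X, hb'li⟩
    have hsub : posHull (Set.range g) ⊆ posHull (Set.range b') := by
      intro y hy
      obtain ⟨μ, hμ0, rfl⟩ := exists_rep_of_mem_posHull hginj hy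
      have hgen : ∀ i, g i ∈ posHull (Set.range b') := by
        intro i
        rcases eq_or_ne i k with hik | h
        · rw [hik]
          set ν : Fin n → ℝ := fun jj => if jj = k then 1 / lam k else -lam jj / lam k with hν
          have hν0 : ∀ jj, 0 ≤ ν jj := by
            intro jj
            rw [hν]
            rcases eq_or_ne jj k with hjk | hjk
            · rw [hjk]
              simp only [if_pos rfl]
              exact div_nonneg zero_le_one hk.le
            · simp only [if_neg hjk]
              exact div_nonneg (neg_nonneg.mpr (hneg jj hjk)) hk.le
          have hmem := sum_smul_mem_posHull b' ν hν0
          have hcomp : ∑ jj, ν jj • b' jj = g k := by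
            rw [hb'def, update_comb g x k lam ν hxrep]
            have hνk : ν k = 1 / lam k := by rw [hν]; simp
            have hcoef : ∀ jj, (ν k * lam jj + if jj = k then 0 else ν jj)
                = if jj = k then (1:ℝ) else 0 := by
              intro jj
              rcases eq_or_ne jj k with hjk | hjk
              · rw [hjk, if_pos rfl, if_pos rfl, add_zero, hνk]
                field_simp
              · rw [if_neg hjk, if_neg hjk, hνk]
                simp only [hν]
                rw [if_neg hjk]
                ring
            rw [Finset.sum_congr rfl fun jj _ => by rw [hcoef jj]]
            simp
          rwa [hcomp] at hmem
        · refine self_mem_posHull ⟨i, ?_⟩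
          rw [hb'def]
          exact Function.update_of_ne h _ _
      choose d hd0 hd using fun i => exists_rep_of_mem_posHull hb'inj (hgen i)
      have hrw : ∑ i, μ i • g i = ∑ jj, (∑ i, μ i * d i jj) • b' jj := by
        calc ∑ i, μ i • g i = ∑ i, μ i • (∑ jj, d i jj • b' jj) := by
              refine Finset.sum_congr rfl fun i _ => ?_
              rw [← hd i]
          _ = ∑ i, ∑ jj, (μ i * d i jj) • b' jj := by
              refine Finset.sum_congr rfl fun i _ => ?_
              rw [Finset.smul_sum]
              refine Finset.sum_congr rfl fun jj _ => ?_
              rw [smul_smul]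
          _ = ∑ jj, ∑ i, (μ i * d i jj) • b' jj := Finset.sum_comm
          _ = ∑ jj, (∑ i, μ i * d i jj) • b' jj := by
              refine Finset.sum_congr rfl fun jj _ => ?_
              rw [Finset.sum_smul]
      rw [hrw]
      exact sum_smul_mem_posHull _ _
        (fun jj => Finset.sum_nonneg fun i _ => mul_nonneg (hμ0 i) (hd0 i jj))
    have heq := le_antisymm hsub (hgmax hb'F hsub)
    have hxmem : x ∈ posHull (Set.range b') := by
      refine self_mem_posHull ⟨k, ?_⟩
      rw [hb'def, Function.update_self]
    rw [← heq] at hxmem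
    obtain ⟨μ, hμ0, hμ⟩ := exists_rep_of_mem_posHull hginj hxmem
    have hlam : lam = μ := rep_unique hg (by rw [← hxrep]; exact hμ)
    rw [hlam] at hj
    exact absurd (hμ0 j) (not_le.mpr hj)
end
end

section
/- Let b₁,…,bₙ be linearly independent vectors in ℝⁿ and suppose x = Σ λᵢ bᵢ and y = Σ θᵢ bᵢ have all coefficients nonnegative (or both all nonpositive). Assume additionally that for every (n+1)-element subset of {x,y,b₁,…,bₙ}, the subset is not in conical position. Then the supports {i : λᵢ ≠ 0} and {i : θᵢ ≠ 0} are either disjoint or one contains the other. -/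
open scoped RealInnerProductSpace
open Finset

noncomputable section

lemma exists_coef (a b s t : ℝ)
    (h : (0 < a ∧ 0 < b) ∨ (a < 0 ∧ b < 0)) :
    ∃ c : ℝ, 0 < a * c + s ∧ 0 < b * c + t := by
  rcases h with ⟨ha, hb⟩ | ⟨ha, hb⟩
  · refine ⟨max ((1 - s)/a) ((1 - t)/b), ?_, ?_⟩
    · have h1 : a * ((1 - s)/a) = 1 - s := by field_simp
      nlinarith [le_max_left ((1-s)/a) ((1-t)/b)]
    · have h1 : b * ((1 - t)/b) = 1 - t := by field_simp
      nlinarith [le_max_right ((1-s)/a) ((1-t)/b)]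
  · refine ⟨min ((1 - s)/a) ((1 - t)/b), ?_, ?_⟩
    · have h1 : a * ((1 - s)/a) = 1 - s := mul_div_cancel₀ _ ha.ne
      nlinarith [min_le_left ((1-s)/a) ((1-t)/b)]
    · have h1 : b * ((1 - t)/b) = 1 - t := mul_div_cancel₀ _ hb.ne
      nlinarith [min_le_right ((1-s)/a) ((1-t)/b)]

lemma exists_dual {n : ℕ} (b : Fin n → EuclideanSpace ℝ (Fin n))
    (hb : LinearIndependent ℝ b) (w : Fin n → ℝ) :
    ∃ v : EuclideanSpace ℝ (Fin n), ∀ m, ⟪v, b m⟫ = w m := by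
  rcases isEmpty_or_nonempty (Fin n) with he | hne
  · exact ⟨0, fun m => he.elim m⟩
  have hcard : Fintype.card (Fin n) = Module.finrank ℝ (EuclideanSpace ℝ (Fin n)) := by
    simp [finrank_euclideanSpace_fin]
  let B := basisOfLinearIndependentOfCardEqFinrank hb hcard
  have hB : ∀ m, B m = b m := fun m => by
    simp [B, coe_basisOfLinearIndependentOfCardEqFinrank]
  let φ : EuclideanSpace ℝ (Fin n) →ₗ[ℝ] ℝ := ∑ l, w l • B.coord l
  have hφ : ∀ m, φ (b m) = w m := by
    intro m
    rw [show b m = B m from (hB m).symm]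
    simp [φ, Module.Basis.coord_apply, Module.Basis.repr_self, Finsupp.single_apply]
  refine ⟨(InnerProductSpace.toDual ℝ _).symm (LinearMap.toContinuousLinearMap φ), fun m => ?_⟩
  rw [InnerProductSpace.toDual_symm_apply]
  exact hφ m

lemma same_sign_zero (a c la ta : ℝ) (ha : 0 ≤ a) (hc : 0 ≤ c)
    (hs : (0 < la ∧ 0 < ta) ∨ (la < 0 ∧ ta < 0)) (h : a * la + c * ta = 0) :
    a = 0 ∧ c = 0 := by
  rcases hs with ⟨h1, h2⟩ | ⟨h1, h2⟩
  · have ha1 : a * la = 0 := le_antisymm (by nlinarith [mul_nonneg hc h2.le]) (by positivity)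
    have hc1 : c * ta = 0 := by linarith
    exact ⟨(mul_eq_zero.mp ha1).resolve_right (ne_of_gt h1),
      (mul_eq_zero.mp hc1).resolve_right (ne_of_gt h2)⟩
  · have ha1 : a * la = 0 := le_antisymm (by nlinarith) (by nlinarith)
    have hc1 : c * ta = 0 := by linarith
    exact ⟨(mul_eq_zero.mp ha1).resolve_right (ne_of_lt h1),
      (mul_eq_zero.mp hc1).resolve_right (ne_of_lt h2)⟩

set_option maxHeartbeats 1000000 in
/-- Supports of two points with coefficients of the same sign pattern are disjoint
or nested, provided no `n+1` of the points `x, y, b₁, …, bₙ` are in conical position. -/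
theorem stmt4 {n : ℕ} (b : Fin n → EuclideanSpace ℝ (Fin n))
    (hb : LinearIndependent ℝ b) (lam th : Fin n → ℝ)
    (x y : EuclideanSpace ℝ (Fin n))
    (hx : x = ∑ i, lam i • b i) (hy : y = ∑ i, th i • b i)
    (hsign : (∀ i, 0 ≤ lam i ∧ 0 ≤ th i) ∨ (∀ i, lam i ≤ 0 ∧ th i ≤ 0))
    (hcon : ∀ S : Set (EuclideanSpace ℝ (Fin n)),
      S ⊆ insert x (insert y (Set.range b)) → S.ncard = n + 1 → ¬ InConicalPos S) :
    Disjoint {i | lam i ≠ 0} {i | th i ≠ 0} ∨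
      {i | lam i ≠ 0} ⊆ {i | th i ≠ 0} ∨ {i | th i ≠ 0} ⊆ {i | lam i ≠ 0} := by
  classical
  by_contra hcontra
  push_neg at hcontra
  obtain ⟨hnd, hn1, hn2⟩ := hcontra
  rw [Set.not_disjoint_iff] at hnd
  obtain ⟨i, hli, hti⟩ := hnd
  obtain ⟨j, hlj, htj⟩ := Set.not_subset.mp hn1
  obtain ⟨k, htk, hlk⟩ := Set.not_subset.mp hn2
  simp only [Set.mem_setOf_eq, not_not] at hli hti hlj htj htk hlk
  have hinj : Function.Injective b := hb.injective
  have hli0 : ∀ c : Fin n → ℝ, ∑ m, c m • b m = 0 → ∀ m, c m = 0 :=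
    fun c h => Fintype.linearIndependent_iff.mp hb c h
  have huniq : ∀ c d : Fin n → ℝ, ∑ m, c m • b m = ∑ m, d m • b m → c = d := by
    intro c d h
    funext m
    have h0 : ∑ m, (c m - d m) • b m = 0 := by
      simp only [sub_smul, Finset.sum_sub_distrib, h, sub_self]
    have := hli0 _ h0 m
    linarith
  have hij : j ≠ i := fun h => hti (h ▸ htj)
  have hik : k ≠ i := fun h => hli (h ▸ hlk)
  have hdelta : ∀ m : Fin n, b m = ∑ l, (if l = m then (1:ℝ) else 0) • b l := by
    intro m
    rw [Finset.sum_eq_single m]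
    · simp
    · intro l _ hl; simp [hl]
    · simp
  have hxbm : ∀ m, x ≠ b m := by
    intro m hxm
    have h1 := huniq lam (fun l => if l = m then (1:ℝ) else 0) (by rw [← hx, hxm, ← hdelta])
    by_cases hmi : m = i
    · have h2 := congrFun h1 j
      rw [if_neg (fun h : j = m => hij (h.trans hmi))] at h2
      exact hlj h2
    · have h2 := congrFun h1 i
      rw [if_neg (fun h : i = m => hmi h.symm)] at h2
      exact hli h2
  have hybm : ∀ m, y ≠ b m := by
    intro m hym
    have h1 := huniq th (fun l => if l = m then (1:ℝ) else 0) (by rw [← hy, hym, ← hdelta])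
    by_cases hmi : m = i
    · have h2 := congrFun h1 k
      rw [if_neg (fun h : k = m => hik (h.trans hmi))] at h2
      exact htk h2
    · have h2 := congrFun h1 i
      rw [if_neg (fun h : i = m => hmi h.symm)] at h2
      exact hti h2
  have hxy : x ≠ y := by
    intro h
    have := congrFun (huniq lam th (by rw [← hx, ← hy, h])) j
    rw [htj] at this
    exact hlj this
  set Tb : Finset (EuclideanSpace ℝ (Fin n)) := (univ.erase i).image b with hTb
  set T : Finset (EuclideanSpace ℝ (Fin n)) := insert x (insert y Tb) with hT
  have hxTb : x ∉ Tb := by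
    simp only [hTb, Finset.mem_image]
    rintro ⟨m, _, hm⟩; exact hxbm m hm.symm
  have hyTb : y ∉ Tb := by
    simp only [hTb, Finset.mem_image]
    rintro ⟨m, _, hm⟩; exact hybm m hm.symm
  have hxIns : x ∉ insert y Tb := by
    simp only [Finset.mem_insert]
    rintro (h | h)
    · exact hxy h
    · exact hxTb h
  have hbiT : b i ∉ T := by
    simp only [hT, hTb, Finset.mem_insert, Finset.mem_image, Finset.mem_erase]
    rintro (h | h | ⟨m, ⟨hmi, _⟩, hm⟩)
    · exact hxbm i h.symm
    · exact hybm i h.symm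
    · exact hmi (hinj hm)
  have hcardT : T.card = n + 1 := by
    rw [hT, Finset.card_insert_of_notMem hxIns, Finset.card_insert_of_notMem hyTb,
      hTb, Finset.card_image_of_injective _ hinj,
      Finset.card_erase_of_mem (Finset.mem_univ i), Finset.card_univ, Fintype.card_fin]
    have := i.pos
    omega
  refine hcon (↑T) ?_ ?_ ?_
  · intro z hz
    simp only [Finset.mem_coe, hT, hTb, Finset.mem_insert, Finset.mem_image,
      Finset.mem_erase, Set.mem_insert_iff] at hz ⊢
    rcases hz with h | h | ⟨m, _, hm⟩
    · exact Or.inl h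
    · exact Or.inr (Or.inl h)
    · exact Or.inr (Or.inr ⟨m, hm⟩)
  · rw [Set.ncard_coe_finset]; exact hcardT
  constructor
  · -- separation from 0
    have hsgn : (0 < lam i ∧ 0 < th i) ∨ (lam i < 0 ∧ th i < 0) := by
      rcases hsign with h | h
      · exact Or.inl ⟨(h i).1.lt_of_ne' hli, (h i).2.lt_of_ne' hti⟩
      · exact Or.inr ⟨(h i).1.lt_of_ne hli, (h i).2.lt_of_ne hti⟩
    obtain ⟨c, hc1, hc2⟩ := exists_coef (lam i) (th i)
      (∑ m ∈ univ.erase i, lam m) (∑ m ∈ univ.erase i, th m) hsgn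
    obtain ⟨v, hv⟩ := exists_dual b hb (fun m => if m = i then c else 1)
    refine ⟨v, ?_⟩
    intro s hs
    simp only [Finset.mem_coe, hT, hTb, Finset.mem_insert, Finset.mem_image,
      Finset.mem_erase] at hs
    have hinx : ⟪v, x⟫ = lam i * c + ∑ m ∈ univ.erase i, lam m := by
      rw [hx, inner_sum]
      simp only [real_inner_smul_right, hv]
      rw [← Finset.add_sum_erase _ _ (Finset.mem_univ i)]
      congr 1
      · simp
      · apply Finset.sum_congr rfl
        intro m hm
        simp [(Finset.mem_erase.mp hm).1]
    have hiny : ⟪v, y⟫ = th i * c + ∑ m ∈ univ.erase i, th m := by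
      rw [hy, inner_sum]
      simp only [real_inner_smul_right, hv]
      rw [← Finset.add_sum_erase _ _ (Finset.mem_univ i)]
      congr 1
      · simp
      · apply Finset.sum_congr rfl
        intro m hm
        simp [(Finset.mem_erase.mp hm).1]
    rcases hs with rfl | rfl | ⟨m, ⟨hmi, _⟩, rfl⟩
    · rw [hinx]; linarith
    · rw [hiny]; linarith
    · rw [hv m]; simp [hmi]
  · -- no element in positive hull of the others
    intro s hs hmem
    obtain ⟨t, cf, htsub, hcnn, hsum⟩ := hmem
    have htT : t ⊆ T := fun z hz => Finset.mem_coe.mp (htsub hz).1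
    have hst : s ∉ t := fun h => (htsub h).2 rfl
    obtain ⟨c', hc'⟩ : ∃ f : EuclideanSpace ℝ (Fin n) → ℝ,
        f = fun z => if z ∈ t then cf z else 0 := ⟨_, rfl⟩
    have hc'nn : ∀ z, 0 ≤ c' z := by
      intro z
      by_cases hz : z ∈ t <;> simp only [hc', hz, if_true, if_false, le_refl]
      exact hcnn z hz
    obtain ⟨α, hα⟩ : ∃ a : ℝ, a = c' x := ⟨_, rfl⟩
    obtain ⟨β, hβ⟩ : ∃ a : ℝ, a = c' y := ⟨_, rfl⟩
    obtain ⟨d, hd⟩ : ∃ f : Fin n → ℝ, f = fun m => c' (b m) := ⟨_, rfl⟩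
    have hdnn : ∀ m, 0 ≤ d m := fun m => hd ▸ hc'nn (b m)
    have hαnn : 0 ≤ α := hα ▸ hc'nn x
    have hβnn : 0 ≤ β := hβ ▸ hc'nn y
    have hdi : d i = 0 := by
      rw [hd]
      simp only [hc']
      rw [if_neg (fun h => hbiT (htT h))]
    have hkey : s = α • x + β • y + ∑ m, d m • b m := by
      rw [← hsum]
      have e1 : ∑ z ∈ t, cf z • z = ∑ z ∈ T, c' z • z := by
        rw [show ∑ z ∈ t, cf z • z = ∑ z ∈ t, c' z • z from
          Finset.sum_congr rfl fun z hz => by simp [hc', hz]]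
        exact Finset.sum_subset htT fun z _ hz => by simp [hc', hz]
      have e2 : ∑ z ∈ T, c' z • z = α • x + (β • y + ∑ z ∈ Tb, c' z • z) := by
        rw [hT, Finset.sum_insert hxIns, Finset.sum_insert hyTb, ← hα, ← hβ]
      have e3 : ∑ z ∈ Tb, c' z • z = ∑ m ∈ univ.erase i, d m • b m := by
        rw [hTb, Finset.sum_image fun a _ a' _ h => hinj h]
        exact Finset.sum_congr rfl fun m _ => by rw [hd]
      have e4 : ∑ m ∈ univ.erase i, d m • b m = ∑ m, d m • b m :=
        Finset.sum_erase _ (by rw [hdi, zero_smul])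
      rw [e1, e2, e3, e4, ← add_assoc]
    have hrep : s = ∑ m, (α * lam m + β * th m + d m) • b m := by
      rw [hkey, hx, hy, Finset.smul_sum, Finset.smul_sum,
        ← Finset.sum_add_distrib, ← Finset.sum_add_distrib]
      exact Finset.sum_congr rfl fun m _ => by
        rw [smul_smul, smul_smul, add_smul, add_smul]
    have hsT : s ∈ T := Finset.mem_coe.mp hs
    simp only [hT, hTb, Finset.mem_insert, Finset.mem_image, Finset.mem_erase] at hsT
    rcases hsT with rfl | rfl | ⟨m₀, ⟨hm₀i, _⟩, rfl⟩
    · -- s = x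
      have hα0 : α = 0 := by
        rw [hα]
        simp only [hc']
        rw [if_neg hst]
      have heq := huniq lam (fun m => α * lam m + β * th m + d m) (by rw [← hx, ← hrep])
      have heqk := congrFun heq k
      have heqi := congrFun heq i
      simp only [hα0, zero_mul, zero_add] at heqk heqi
      rcases hsign with hpos | hneg
      · have hthk : 0 < th k := (hpos k).2.lt_of_ne' htk
        have hβ0 : β = 0 := by
          have h2 : β * th k = 0 := by
            nlinarith [hdnn k, mul_nonneg hβnn hthk.le, heqk, hlk]
          exact (mul_eq_zero.mp h2).resolve_right (ne_of_gt hthk)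
        rw [hβ0, zero_mul, zero_add, hdi] at heqi
        exact hli heqi
      · have heqj := congrFun heq j
        simp only [hα0, zero_mul, zero_add, htj, mul_zero] at heqj
        have hlmj : lam j < 0 := (hneg j).1.lt_of_ne hlj
        linarith [hdnn j]
    · -- s = y
      have hβ0 : β = 0 := by
        rw [hβ]
        simp only [hc']
        rw [if_neg hst]
      have heq := huniq th (fun m => α * lam m + β * th m + d m) (by rw [← hy, ← hrep])
      have heqj := congrFun heq j
      have heqi := congrFun heq i
      simp only [hβ0, zero_mul, add_zero] at heqj heqi
      rcases hsign with hpos | hneg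
      · have hlmj : 0 < lam j := (hpos j).1.lt_of_ne' hlj
        have hα0 : α = 0 := by
          have h2 : α * lam j = 0 := by
            nlinarith [hdnn j, mul_nonneg hαnn hlmj.le, heqj, htj]
          exact (mul_eq_zero.mp h2).resolve_right (ne_of_gt hlmj)
        rw [hα0, zero_mul, zero_add, hdi] at heqi
        exact hti heqi
      · have heqk := congrFun heq k
        simp only [hβ0, hlk, mul_zero, zero_mul, zero_add, add_zero] at heqk
        have hthk : th k < 0 := (hneg k).2.lt_of_ne htk
        linarith [hdnn k]
    · -- s = b m₀
      have hdm₀ : d m₀ = 0 := by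
        rw [hd]
        simp only [hc']
        rw [if_neg hst]
      have heq := huniq (fun l => if l = m₀ then (1:ℝ) else 0)
        (fun m => α * lam m + β * th m + d m) (by rw [← hdelta, ← hrep])
      have heqi := congrFun heq i
      have heqm₀ := congrFun heq m₀
      rw [if_neg (fun h : i = m₀ => hm₀i h.symm)] at heqi
      rw [if_pos rfl] at heqm₀
      have hsgn : (0 < lam i ∧ 0 < th i) ∨ (lam i < 0 ∧ th i < 0) := by
        rcases hsign with h | h
        · exact Or.inl ⟨(h i).1.lt_of_ne' hli, (h i).2.lt_of_ne' hti⟩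
        · exact Or.inr ⟨(h i).1.lt_of_ne hli, (h i).2.lt_of_ne hti⟩
      obtain ⟨hα0, hβ0⟩ := same_sign_zero α β (lam i) (th i) hαnn hβnn hsgn
        (by rw [hdi] at heqi; linarith)
      rw [hα0, hβ0, hdm₀] at heqm₀
      norm_num at heqm₀
end
end

section
/- Let X₁,…,Xₖ be finite subsets of ℝⁿ such that each Xᵢ is the vertex set of a simplex whose relative interior contains 0, and the linear spans of the Xᵢ sum directly to ℝⁿ. For each choice (x₁,…,xₖ) with xᵢ ∈ Xᵢ, define the cone C(x₁,…,xₖ) = pos((X₁\{x₁}) ∪ … ∪ (Xₖ\{xₖ})). Then the union of these Π|Xᵢ| cones is all of ℝⁿ. -/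
open scoped RealInnerProductSpace
open Finset

noncomputable section

/-- The cones `pos((X₁ \ {x₁}) ∪ ⋯ ∪ (Xₖ \ {xₖ}))` over all choices `xᵢ ∈ Xᵢ`
cover `ℝⁿ`. -/
theorem stmt7 {n k : ℕ} (X : Fin k → Finset (EuclideanSpace ℝ (Fin n)))
    (hsimp : ∀ i, ∃ μ : EuclideanSpace ℝ (Fin n) → ℝ,
      (∀ x ∈ X i, 0 < μ x) ∧ (∑ x ∈ X i, μ x = 1) ∧ (∑ x ∈ X i, μ x • x = 0))
    (hdim : ∀ i, Module.finrank ℝ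
      (Submodule.span ℝ ((X i : Set (EuclideanSpace ℝ (Fin n))))) = (X i).card - 1)
    (hind : iSupIndep
      (fun i => Submodule.span ℝ ((X i : Set (EuclideanSpace ℝ (Fin n))))))
    (hsum : (⨆ i, Submodule.span ℝ ((X i : Set (EuclideanSpace ℝ (Fin n))))) = ⊤) :
    ∀ y : EuclideanSpace ℝ (Fin n), ∃ c : Fin k → EuclideanSpace ℝ (Fin n),
      (∀ i, c i ∈ X i) ∧
      y ∈ posHull (⋃ i, ((X i : Set (EuclideanSpace ℝ (Fin n))) \ {c i})) := by
  classical
  choose μ hμpos hμsum hμzero using hsimp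
  intro y
  have hy : y ∈ (⨆ i, Submodule.span ℝ ((X i : Set (EuclideanSpace ℝ (Fin n))))) := by
    rw [hsum]; exact Submodule.mem_top
  rw [Submodule.mem_iSup_iff_exists_finsupp] at hy
  obtain ⟨f, hf, hfs⟩ := hy
  choose a ha using fun i => ((Submodule.mem_span_finset.mp (hf i)).imp fun _ h => h.2)
  have hne : ∀ i, (X i).Nonempty := by
    intro i
    rcases (X i).eq_empty_or_nonempty with h | h
    · exfalso; have := hμsum i; rw [h] at this; simp at this
    · exact h
  choose c hc hcmax using fun i => (X i).exists_max_image
    (fun x => -(a i x) / (μ i x)) (hne i)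
  set T : Fin k → ℝ := fun i => -(a i (c i)) / (μ i (c i)) with hT
  have hnonneg : ∀ i, ∀ x ∈ X i, 0 ≤ a i x + T i * μ i x := by
    intro i x hx
    have hμx := hμpos i x hx
    have h1 : -(a i x) / (μ i x) ≤ T i := hcmax i x hx
    have h2 : -(a i x) ≤ T i * μ i x := (div_le_iff₀ hμx).mp h1
    linarith
  have hzero : ∀ i, a i (c i) + T i * μ i (c i) = 0 := by
    intro i
    have hμc := hμpos i (c i) (hc i)
    rw [hT]
    field_simp
    ring
  have hkey : ∀ i, ∑ x ∈ (X i).erase (c i), (a i x + T i * μ i x) • x = f i := by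
    intro i
    have h0 : (a i (c i) + T i * μ i (c i)) • (c i) = 0 := by
      rw [hzero i, zero_smul]
    rw [Finset.sum_erase (f := fun x => (a i x + T i * μ i x) • x) (X i) h0]
    have : ∑ x ∈ X i, (a i x + T i * μ i x) • x
        = (∑ x ∈ X i, a i x • x) + T i • (∑ x ∈ X i, μ i x • x) := by
      rw [Finset.smul_sum, ← Finset.sum_add_distrib]
      congr 1; ext x; rw [add_smul, smul_smul]
    rw [this, ha i, hμzero i, smul_zero, add_zero]
  set b : Fin k → EuclideanSpace ℝ (Fin n) → ℝ :=
    fun i z => if z ∈ (X i).erase (c i) then a i z + T i * μ i z else 0 with hb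
  refine ⟨c, hc, Finset.univ.biUnion (fun i => (X i).erase (c i)),
    fun z => ∑ i, b i z, ?_, ?_, ?_⟩
  · intro z hz
    simp only [Finset.coe_biUnion, Finset.coe_univ, Set.mem_iUnion, Finset.mem_coe] at hz
    obtain ⟨i, _, hzi⟩ := hz
    exact Set.mem_iUnion.mpr ⟨i, by
      simpa [Finset.coe_erase] using (Finset.coe_subset.mpr (le_refl _)) hzi⟩
  · intro z _
    apply Finset.sum_nonneg
    intro i _
    rw [hb]
    dsimp only
    split_ifs with h
    · exact hnonneg i z (Finset.mem_of_mem_erase h)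
    · exact le_refl _
  · rw [Finset.sum_congr rfl (fun z _ => Finset.sum_smul (f := fun i => b i z)),
      Finset.sum_comm]
    have hstep : ∀ i, ∑ z ∈ Finset.univ.biUnion (fun j => (X j).erase (c j)),
        b i z • z = f i := by
      intro i
      rw [← hkey i]
      rw [← Finset.sum_subset (Finset.subset_biUnion_of_mem _ (Finset.mem_univ i))]
      · apply Finset.sum_congr rfl
        intro z hz
        rw [hb]; simp [hz]
      · intro z _ hz
        rw [hb]; simp [hz]
    rw [Finset.sum_congr rfl (fun i _ => hstep i)]
    rw [← hfs]
    exact (Finsupp.sum_fintype f (fun _ v => v) (fun _ => rfl)).symm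
end
end

section
/- Let P ⊆ ℝⁿ be a polytope with 0 in its interior, and suppose the set N(P) of facet normals of P can be partitioned-covered by q full-dimensional cones C₁,…,Cq whose union is ℝⁿ, with vectors v₁,…,v_q satisfying ⟨m, vⱼ⟩ > 0 for all nonzero m ∈ Cⱼ. Then there exists ε > 0 such that the q directions εv₁,…,εv_q illuminate P: for every x ∈ ∂P there is j with x − εvⱼ ∈ int P. -/
open scoped RealInnerProductSpace
open Finset

noncomputable section

lemma shrink_interior {E : Type*} [NormedAddCommGroup E] [NormedSpace ℝ E]
    {P : Set E} (hP : Convex ℝ P) {x w : E} {a b : ℝ}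
    (hx : x ∈ P) (hmem : x - a • w ∈ interior P) (hb : 0 < b) (hba : b ≤ a) :
    x - b • w ∈ interior P := by
  have ha : 0 < a := lt_of_lt_of_le hb hba
  have key := hP.add_smul_sub_mem_interior hx hmem
    (t := b / a) ⟨div_pos hb ha, (div_le_one ha).2 hba⟩
  have : x + (b / a) • (x - a • w - x) = x - b • w := by
    rw [sub_sub_cancel_left, smul_neg, smul_smul, div_mul_cancel₀ _ ha.ne', ← sub_eq_add_neg]
  rwa [this] at key

/-- If `ℝⁿ` is covered by cones `C₁, …, C_q` illuminated by vectors `v₁, …, v_q`, and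
for each boundary point the nearly-active normals lie in one cone, then `P` is
illuminated by `ε v₁, …, ε v_q` for some uniform `ε > 0`. -/
theorem stmt12 {n q : ℕ} (N : Finset (EuclideanSpace ℝ (Fin n)))
    (h : EuclideanSpace ℝ (Fin n) → ℝ) (P : Set (EuclideanSpace ℝ (Fin n)))
    (hP : P = {p | ∀ m ∈ N, ⟪m, p⟫ ≤ h m})
    (hcomp : IsCompact P)
    (h0 : (0 : EuclideanSpace ℝ (Fin n)) ∈ interior P)
    (C : Fin q → Set (EuclideanSpace ℝ (Fin n)))
    (hcover : (⋃ j, C j) = Set.univ)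
    (v : Fin q → EuclideanSpace ℝ (Fin n))
    (hv : ∀ j, ∀ m ∈ C j, m ≠ 0 → 0 < ⟪m, v j⟫)
    (hsingle : ∀ x ∈ frontier P, ∃ j, ∃ δ > (0 : ℝ),
      ∀ m ∈ N, h m - ⟪m, x⟫ ≤ δ → m ∈ C j) :
    ∃ ε > (0 : ℝ), ∀ x ∈ frontier P, ∃ j, x - ε • v j ∈ interior P := by
  have hPclosed : IsClosed P := hcomp.isClosed
  have hPconv : Convex ℝ P := by
    rw [hP]
    have : {p : EuclideanSpace ℝ (Fin n) | ∀ m ∈ N, ⟪m, p⟫ ≤ h m}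
        = ⋂ m ∈ N, {p | ⟪m, p⟫ ≤ h m} := by ext p; simp
    rw [this]
    exact convex_iInter fun m => convex_iInter fun _ =>
      convex_halfSpace_le (innerSL ℝ m).toLinearMap.isLinear _
  have h0P : (0 : EuclideanSpace ℝ (Fin n)) ∈ P := interior_subset h0
  have hh : ∀ m ∈ N, (0 : ℝ) ≤ h m := by
    intro m hm
    rw [hP] at h0P
    simpa using h0P m hm
  -- the strict-inequality set is contained in the interior
  set S : Set (EuclideanSpace ℝ (Fin n)) :=
    {p | ∀ m ∈ N, m ≠ 0 → ⟪m, p⟫ < h m} with hS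
  have hSopen : IsOpen S := by
    have : S = ⋂ m ∈ N, {p | m ≠ 0 → ⟪m, p⟫ < h m} := by ext p; simp [hS]
    rw [this]
    refine isOpen_biInter_finset fun m _ => ?_
    by_cases hm0 : m = 0
    · simp [hm0]
    · have : {p : EuclideanSpace ℝ (Fin n) | m ≠ 0 → ⟪m, p⟫ < h m}
          = {p | ⟪m, p⟫ < h m} := by ext p; simp [hm0]
      rw [this]
      exact isOpen_lt (innerSL ℝ m).continuous continuous_const
  have hSint : S ⊆ interior P := by
    apply interior_maximal _ hSopen
    intro p hp
    rw [hP]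
    intro m hm
    by_cases hm0 : m = 0
    · simpa [hm0] using hh m hm
    · exact (hp m hm hm0).le
  -- pointwise illumination
  have key : ∀ x ∈ frontier P, ∃ j, ∃ ε > (0 : ℝ), x - ε • v j ∈ interior P := by
    intro x hx
    obtain ⟨j, δ, hδ, hjx⟩ := hsingle x hx
    have hxP : x ∈ P := hPclosed.frontier_subset hx
    set D : ℝ := 1 + ∑ m ∈ N, |⟪m, v j⟫| with hD
    have hsum : (0:ℝ) ≤ ∑ m ∈ N, |⟪m, v j⟫| :=
      Finset.sum_nonneg fun _ _ => abs_nonneg _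
    have hDpos : 0 < D := by positivity
    have hepos : 0 < δ / D := div_pos hδ hDpos
    have heD : (δ / D) * D = δ := div_mul_cancel₀ _ hDpos.ne'
    refine ⟨j, δ / D, hepos, hSint ?_⟩
    intro m hm hm0
    have hxm : ⟪m, x⟫ ≤ h m := by rw [hP] at hxP; exact hxP m hm
    have hvin : ⟪m, x - (δ / D) • v j⟫ = ⟪m, x⟫ - (δ / D) * ⟪m, v j⟫ := by
      rw [inner_sub_right, real_inner_smul_right]
    rw [hvin]
    by_cases hcase : h m - ⟪m, x⟫ ≤ δ
    · have hpos := hv j m (hjx m hm hcase) hm0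
      nlinarith
    · push_neg at hcase
      have habs : |⟪m, v j⟫| ≤ D - 1 := by
        have := Finset.single_le_sum (f := fun m => |⟪m, v j⟫|)
          (fun i _ => abs_nonneg _) hm
        linarith
      have h1 : (δ / D) * |⟪m, v j⟫| ≤ (δ / D) * (D - 1) :=
        mul_le_mul_of_nonneg_left habs hepos.le
      have h2 : -|⟪m, v j⟫| ≤ ⟪m, v j⟫ := neg_abs_le _
      nlinarith
  -- compactness: uniform ε
  by_cases hfr : frontier P = ∅
  · exact ⟨1, one_pos, fun x hx => absurd hx (by simp [hfr])⟩
  have hfrne : (frontier P).Nonempty := Set.nonempty_iff_ne_empty.2 hfr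
  have hfrcomp : IsCompact (frontier P) :=
    hcomp.of_isClosed_subset isClosed_frontier hPclosed.frontier_subset
  choose jf ε hε hmem using key
  set U : frontier P → Set (EuclideanSpace ℝ (Fin n)) :=
    fun z => (fun y => y - ε z z.2 • v (jf z z.2)) ⁻¹' interior P with hU
  have hUopen : ∀ z, IsOpen (U z) := fun z =>
    isOpen_interior.preimage (continuous_id.sub continuous_const)
  have hUcov : frontier P ⊆ ⋃ z, U z := by
    intro y hy
    exact Set.mem_iUnion.2 ⟨⟨y, hy⟩, hmem y hy⟩
  obtain ⟨t, ht⟩ := hfrcomp.elim_finite_subcover U hUopen hUcov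
  have htne : t.Nonempty := by
    obtain ⟨y, hy⟩ := hfrne
    obtain ⟨z, hz, _⟩ := Set.mem_iUnion₂.1 (ht hy)
    exact ⟨z, hz⟩
  refine ⟨t.inf' htne (fun z => ε z z.2), ?_, ?_⟩
  · exact (Finset.lt_inf'_iff htne).2 fun z _ => hε z z.2
  · intro x hx
    obtain ⟨z, hz, hxz⟩ := Set.mem_iUnion₂.1 (ht hx)
    refine ⟨jf z z.2, shrink_interior hPconv (hPclosed.frontier_subset hx) hxz
      ((Finset.lt_inf'_iff htne).2 fun z _ => hε z z.2)
      (Finset.inf'_le _ hz)⟩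
end
end

section
/- Let V₁ and V₂ be two finite sets of vectors in ℝⁿ, each linearly independent, such that pos(V₁) and pos(V₂) intersect in a point lying in the relative interior of both cones, i.e., Σ_{x∈V₁} λₓ x = Σ_{y∈V₂} θ_y y with all λₓ, θ_y > 0. Then there exist disjoint subsets V₁' ⊆ V₁ and V₂' ⊆ V₂, each linearly independent, with pos(V₁') ∩ pos(V₂') ≠ {0}. -/
open scoped RealInnerProductSpace
open Finset

noncomputable section

set_option maxHeartbeats 1000000 in
/-- If the positive hulls of two distinct linearly independent sets `V₁, V₂` meet at a
point interior to both cones, then there are disjoint linearly independent subsets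
`V₁' ⊆ V₁`, `V₂' ⊆ V₂` whose positive hulls still meet nontrivially. -/
theorem stmt15 {n : ℕ} (V₁ V₂ : Finset (EuclideanSpace ℝ (Fin n)))
    (hne : V₁ ≠ V₂)
    (h₁ : LinearIndependent ℝ (fun v : V₁ => (v : EuclideanSpace ℝ (Fin n))))
    (h₂ : LinearIndependent ℝ (fun v : V₂ => (v : EuclideanSpace ℝ (Fin n))))
    (lam th : EuclideanSpace ℝ (Fin n) → ℝ)
    (hlam : ∀ x ∈ V₁, 0 < lam x) (hth : ∀ y ∈ V₂, 0 < th y)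
    (heq : ∑ x ∈ V₁, lam x • x = ∑ y ∈ V₂, th y • y) :
    ∃ W₁ W₂ : Finset (EuclideanSpace ℝ (Fin n)),
      W₁ ⊆ V₁ ∧ W₂ ⊆ V₂ ∧ Disjoint W₁ W₂ ∧
      LinearIndependent ℝ (fun v : W₁ => (v : EuclideanSpace ℝ (Fin n))) ∧
      LinearIndependent ℝ (fun v : W₂ => (v : EuclideanSpace ℝ (Fin n))) ∧
      posHull (W₁ : Set (EuclideanSpace ℝ (Fin n))) ∩
        posHull (W₂ : Set (EuclideanSpace ℝ (Fin n))) ≠ {0} := by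
  classical
  set μ : EuclideanSpace ℝ (Fin n) → ℝ := fun x => min (lam x) (th x) with hμ
  set c₁ : EuclideanSpace ℝ (Fin n) → ℝ :=
    fun x => lam x - if x ∈ V₂ then μ x else 0 with hc₁
  set c₂ : EuclideanSpace ℝ (Fin n) → ℝ :=
    fun x => th x - if x ∈ V₁ then μ x else 0 with hc₂
  have hc₁nn : ∀ x ∈ V₁, 0 ≤ c₁ x := by
    intro x hx
    simp only [hc₁]
    split
    · exact sub_nonneg.mpr (min_le_left _ _)
    · simpa using (hlam x hx).le
  have hc₂nn : ∀ x ∈ V₂, 0 ≤ c₂ x := by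
    intro x hx
    simp only [hc₂]
    split
    · exact sub_nonneg.mpr (min_le_right _ _)
    · simpa using (hth x hx).le
  set W₁ := V₁.filter (fun x => 0 < c₁ x) with hW₁
  set W₂ := V₂.filter (fun x => 0 < c₂ x) with hW₂
  have hW₁sub : W₁ ⊆ V₁ := filter_subset _ _
  have hW₂sub : W₂ ⊆ V₂ := filter_subset _ _
  -- key sum identity
  have key : ∑ x ∈ V₁, c₁ x • x = ∑ y ∈ V₂, c₂ y • y := by
    have e1 : ∑ x ∈ V₁, c₁ x • x
        = ∑ x ∈ V₁, lam x • x - ∑ x ∈ V₁ ∩ V₂, μ x • x := by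
      rw [show V₁ ∩ V₂ = V₁.filter (fun x => x ∈ V₂) from
        (Finset.filter_mem_eq_inter).symm, Finset.sum_filter,
        ← Finset.sum_sub_distrib]
      apply Finset.sum_congr rfl
      intro x hx
      simp only [hc₁, sub_smul]
      split <;> simp
    have e2 : ∑ y ∈ V₂, c₂ y • y
        = ∑ y ∈ V₂, th y • y - ∑ x ∈ V₁ ∩ V₂, μ x • x := by
      rw [Finset.inter_comm, show V₂ ∩ V₁ = V₂.filter (fun x => x ∈ V₁) from
        (Finset.filter_mem_eq_inter).symm, Finset.sum_filter,
        ← Finset.sum_sub_distrib]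
      apply Finset.sum_congr rfl
      intro x hx
      simp only [hc₂, sub_smul]
      split <;> simp
    rw [e1, e2, heq]
  -- restrict sums to the filtered sets
  have r1 : ∑ x ∈ V₁, c₁ x • x = ∑ x ∈ W₁, c₁ x • x := by
    refine (Finset.sum_subset hW₁sub ?_).symm
    intro x hx hnx
    have : c₁ x = 0 :=
      le_antisymm (not_lt.mp (by simpa [hW₁, hx] using hnx)) (hc₁nn x hx)
    simp [this]
  have r2 : ∑ y ∈ V₂, c₂ y • y = ∑ y ∈ W₂, c₂ y • y := by
    refine (Finset.sum_subset hW₂sub ?_).symm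
    intro x hx hnx
    have : c₂ x = 0 :=
      le_antisymm (not_lt.mp (by simpa [hW₂, hx] using hnx)) (hc₂nn x hx)
    simp [this]
  have hpq : ∑ x ∈ W₁, c₁ x • x = ∑ y ∈ W₂, c₂ y • y := by
    rw [← r1, key, r2]
  -- disjointness
  have hdisj : Disjoint W₁ W₂ := by
    rw [Finset.disjoint_left]
    intro x hx₁ hx₂
    have hxV₁ : x ∈ V₁ := hW₁sub hx₁
    have hxV₂ : x ∈ V₂ := hW₂sub hx₂
    have ha : 0 < c₁ x := (Finset.mem_filter.mp hx₁).2
    have hb : 0 < c₂ x := (Finset.mem_filter.mp hx₂).2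
    simp only [hc₁, hxV₂, if_pos, sub_pos] at ha
    simp only [hc₂, hxV₁, if_pos, sub_pos] at hb
    rcases min_choice (lam x) (th x) with h | h
    · exact absurd (h ▸ ha) (lt_irrefl _)
    · exact absurd (h ▸ hb) (lt_irrefl _)
  -- linear independence of subsets
  have hli₁ : LinearIndependent ℝ
      (fun v : W₁ => (v : EuclideanSpace ℝ (Fin n))) := by
    refine h₁.comp (fun v : {x // x ∈ W₁} => (⟨v.1, hW₁sub v.2⟩ : {x // x ∈ V₁})) ?_
    intro a b hab
    have h : (a : EuclideanSpace ℝ (Fin n)) = b := by simpa using congrArg Subtype.val hab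
    exact Subtype.ext h
  have hli₂ : LinearIndependent ℝ
      (fun v : W₂ => (v : EuclideanSpace ℝ (Fin n))) := by
    refine h₂.comp (fun v : {x // x ∈ W₂} => (⟨v.1, hW₂sub v.2⟩ : {x // x ∈ V₂})) ?_
    intro a b hab
    have h : (a : EuclideanSpace ℝ (Fin n)) = b := by simpa using congrArg Subtype.val hab
    exact Subtype.ext h
  -- the common point is nonzero
  have hpne : ∑ x ∈ W₁, c₁ x • x ≠ 0 := by
    intro hp0
    have z₁ : ∀ x ∈ W₁, c₁ x = 0 := by
      have := Fintype.linearIndependent_iff.mp hli₁ (fun v => c₁ v.1) ?_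
      · intro x hx; exact this ⟨x, hx⟩
      · rw [Finset.sum_coe_sort W₁ (fun x => c₁ x • x)]
        exact hp0
    have z₂ : ∀ x ∈ W₂, c₂ x = 0 := by
      have := Fintype.linearIndependent_iff.mp hli₂ (fun v => c₂ v.1) ?_
      · intro x hx; exact this ⟨x, hx⟩
      · rw [Finset.sum_coe_sort W₂ (fun x => c₂ x • x)]
        exact hpq ▸ hp0
    have hW₁e : ∀ x, x ∉ W₁ := fun x hx =>
      absurd ((Finset.mem_filter.mp hx).2) (by simp [z₁ x hx])
    have hW₂e : ∀ x, x ∉ W₂ := fun x hx =>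
      absurd ((Finset.mem_filter.mp hx).2) (by simp [z₂ x hx])
    apply hne
    ext x
    constructor
    · intro hx
      by_contra hx2
      have : 0 < c₁ x := by simp [hc₁, hx2, hlam x hx]
      exact hW₁e x (Finset.mem_filter.mpr ⟨hx, this⟩)
    · intro hx
      by_contra hx2
      have : 0 < c₂ x := by simp [hc₂, hx2, hth x hx]
      exact hW₂e x (Finset.mem_filter.mpr ⟨hx, this⟩)
  refine ⟨W₁, W₂, hW₁sub, hW₂sub, hdisj, hli₁, hli₂, ?_⟩
  intro hcon
  have hmem : (∑ x ∈ W₁, c₁ x • x) ∈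
      posHull (W₁ : Set (EuclideanSpace ℝ (Fin n))) ∩
        posHull (W₂ : Set (EuclideanSpace ℝ (Fin n))) := by
    constructor
    · exact ⟨W₁, c₁, subset_rfl, fun z hz => hc₁nn z (hW₁sub hz), rfl⟩
    · exact ⟨W₂, c₂, subset_rfl, fun z hz => hc₂nn z (hW₂sub hz), hpq.symm⟩
  rw [hcon] at hmem
  exact hpne hmem
end
end

section
/- Suppose x, y ∈ ℝⁿ and b₁,…,bₙ are linearly independent with x = Σ λᵢ bᵢ, y = Σ θᵢ bᵢ, all λᵢ, θᵢ ≥ 0, supports supp(x) = {1,…,k₂} and supp(y) = {k₁,…,k₃} with 1 < k₁ ≤ k₂ < k₃ (overlapping but incomparable supports). Then the n+1 vectors {x, y} ∪ {b₁,…,bₙ} \ {b_{k₁}} are in conical position. -/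
open scoped RealInnerProductSpace
open Finset

noncomputable section

/-- Two nonnegative points with overlapping but incomparable supports (intervals
`{0,…,k₂}` and `{k₁,…,k₃}` with `0 < k₁ ≤ k₂ < k₃`) yield `n+1` points
`{x, y} ∪ {b₁,…,bₙ} \ {b_{k₁}}` in conical position. -/
theorem stmt16 {n : ℕ} (b : Fin n → EuclideanSpace ℝ (Fin n))
    (hb : LinearIndependent ℝ b) (lam th : Fin n → ℝ)
    (hlam : ∀ i, 0 ≤ lam i) (hth : ∀ i, 0 ≤ th i)
    (x y : EuclideanSpace ℝ (Fin n))
    (hx : x = ∑ i, lam i • b i) (hy : y = ∑ i, th i • b i)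
    (k₁ k₂ k₃ : Fin n)
    (hsx : {i : Fin n | lam i ≠ 0} = {i | i ≤ k₂})
    (hsy : {i : Fin n | th i ≠ 0} = {i | k₁ ≤ i ∧ i ≤ k₃})
    (h1 : 0 < (k₁ : ℕ)) (h2 : k₁ ≤ k₂) (h3 : k₂ < k₃) :
    InConicalPos ({x, y} ∪ (Set.range b \ {b k₁})) := by
  haveI : Nonempty (Fin n) := ⟨k₁⟩
  have hn : 0 < n := k₁.pos
  set i0 : Fin n := ⟨0, hn⟩ with hi0
  -- basic facts about the coefficients
  have hlx : ∀ i : Fin n, lam i ≠ 0 ↔ i ≤ k₂ := fun i => Set.ext_iff.mp hsx i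
  have hly : ∀ i : Fin n, th i ≠ 0 ↔ k₁ ≤ i ∧ i ≤ k₃ := fun i => Set.ext_iff.mp hsy i
  have hlam_pos : ∀ i, i ≤ k₂ → 0 < lam i := fun i h =>
    lt_of_le_of_ne (hlam i) (Ne.symm ((hlx i).mpr h))
  have hth_pos : ∀ i, k₁ ≤ i → i ≤ k₃ → 0 < th i := fun i h h' =>
    lt_of_le_of_ne (hth i) (Ne.symm ((hly i).mpr ⟨h, h'⟩))
  have hi0k2 : i0 ≤ k₂ := by simp [Fin.le_def, hi0]
  have hlam0 : 0 < lam i0 := hlam_pos i0 hi0k2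
  have hth0 : th i0 = 0 := by
    by_contra h
    exact absurd ((hly i0).mp h).1 (by simp [Fin.le_def, hi0]; omega)
  have hlamk1 : 0 < lam k₁ := hlam_pos k₁ h2
  have hthk1 : 0 < th k₁ := hth_pos k₁ le_rfl (h2.trans h3.le)
  have hthk3 : 0 < th k₃ := hth_pos k₃ (h2.trans h3.le) le_rfl
  have hlamk3 : lam k₃ = 0 := by
    by_contra h
    exact absurd ((hlx k₃).mp h) (not_le.mpr h3)
  -- the basis
  have hcard : Fintype.card (Fin n) = Module.finrank ℝ (EuclideanSpace ℝ (Fin n)) := by simp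
  set B : Module.Basis (Fin n) ℝ (EuclideanSpace ℝ (Fin n)) :=
    basisOfLinearIndependentOfCardEqFinrank hb hcard with hBdef
  have hB : ∀ i, B i = b i := fun i => by
    simp [hBdef, coe_basisOfLinearIndependentOfCardEqFinrank]
  have hrb : ∀ m i, B.repr (b m) i = if m = i then 1 else 0 := by
    intro m i
    rw [← hB, B.repr_self, Finsupp.single_apply]
  have hrx : ∀ i, B.repr x i = lam i := by
    intro i
    have : x = ∑ j, lam j • B j := by rw [hx]; simp [hB]
    rw [this, B.repr_sum_self]
  have hry : ∀ i, B.repr y i = th i := by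
    intro i
    have : y = ∑ j, th j • B j := by rw [hy]; simp [hB]
    rw [this, B.repr_sum_self]
  have key : ∀ (t : Finset (EuclideanSpace ℝ (Fin n))) (c : EuclideanSpace ℝ (Fin n) → ℝ)
      (i : Fin n), B.repr (∑ z ∈ t, c z • z) i = ∑ z ∈ t, c z * B.repr z i := by
    intro t c i
    simp [map_sum, Finset.sum_apply']
  set S : Set (EuclideanSpace ℝ (Fin n)) := {x, y} ∪ (Set.range b \ {b k₁}) with hS
  have hmem : ∀ z ∈ S, z = x ∨ z = y ∨ ∃ m, m ≠ k₁ ∧ z = b m := by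
    intro z hz
    rcases hz with (rfl | rfl) | ⟨⟨m, rfl⟩, hm⟩
    · exact Or.inl rfl
    · exact Or.inr (Or.inl rfl)
    · refine Or.inr (Or.inr ⟨m, fun h => ?_, rfl⟩)
      exact hm (by rw [h]; rfl)
  have hnn : ∀ z ∈ S, ∀ i, 0 ≤ B.repr z i := by
    intro z hz i
    rcases hmem z hz with rfl | rfl | ⟨m, hm, rfl⟩
    · rw [hrx]; exact hlam i
    · rw [hry]; exact hth i
    · rw [hrb]; split <;> norm_num
  constructor
  · -- separating vector
    set f : EuclideanSpace ℝ (Fin n) →ₗ[ℝ] ℝ := ∑ i, B.coord i with hf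
    refine ⟨(InnerProductSpace.toDual ℝ _).symm (LinearMap.toContinuousLinearMap f), ?_⟩
    intro s hs
    rw [InnerProductSpace.toDual_symm_apply]
    have hfs : (LinearMap.toContinuousLinearMap f) s = ∑ i, B.repr s i := by
      simp [hf, LinearMap.sum_apply, Module.Basis.coord_apply]
    rw [hfs]
    rcases hmem s hs with rfl | rfl | ⟨m, hm, rfl⟩
    · refine Finset.sum_pos' (fun i _ => by rw [hrx]; exact hlam i) ⟨k₁, mem_univ _, ?_⟩
      rw [hrx]; exact hlamk1
    · refine Finset.sum_pos' (fun i _ => by rw [hry]; exact hth i) ⟨k₁, mem_univ _, ?_⟩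
      rw [hry]; exact hthk1
    · have : ∑ i, B.repr (b m) i = 1 := by
        simp [hrb]
      rw [this]; norm_num
  · -- no element in the positive hull of the others
    rintro s hs ⟨t, c, hts, hc, hsum⟩
    have hco : ∀ i, B.repr s i = ∑ z ∈ t, c z * B.repr z i := by
      intro i
      rw [← hsum, key]
    have hmem' : ∀ z ∈ t, z ∈ S ∧ z ≠ s := by
      intro z hz
      have := hts hz
      exact ⟨this.1, this.2⟩
    rcases hmem s hs with rfl | rfl | ⟨j, hj, rfl⟩
    · -- s = x
      have hz : ∀ z ∈ t, z = y ∨ ∃ m, m ≠ k₁ ∧ z = b m := by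
        intro z hz
        rcases hmem z (hmem' z hz).1 with rfl | h | h
        · exact absurd rfl (hmem' z hz).2
        · exact Or.inl h
        · exact Or.inr h
      have hyt : y ∈ t := by
        by_contra hyt
        have hzero : ∀ z ∈ t, c z * B.repr z k₁ = 0 := by
          intro z hzt
          rcases hz z hzt with rfl | ⟨m, hm, rfl⟩
          · exact absurd hzt hyt
          · rw [hrb]; simp [hm]
        have := hco k₁
        rw [Finset.sum_eq_zero hzero, hrx] at this
        exact absurd this hlamk1.ne'
      have hcy : lam k₁ = c y * th k₁ := by
        have h := hco k₁
        rw [hrx, Finset.sum_eq_single_of_mem y hyt, hry] at h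
        · exact h
        · intro z hzt hzy
          rcases hz z hzt with rfl | ⟨m, hm, rfl⟩
          · exact absurd rfl hzy
          · rw [hrb]; simp [hm]
      have hcy_pos : 0 < c y := by
        rcases lt_or_ge 0 (c y) with h | h
        · exact h
        · nlinarith [hthk1]
      have hle : c y * th k₃ ≤ ∑ z ∈ t, c z * B.repr z k₃ := by
        have : c y * th k₃ = c y * B.repr y k₃ := by rw [hry]
        rw [this]
        exact Finset.single_le_sum
          (fun z hzt => mul_nonneg (hc z hzt) (hnn z (hmem' z hzt).1 k₃)) hyt
      have h := hco k₃
      rw [hrx, hlamk3] at h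
      nlinarith
    · -- s = y
      have hz : ∀ z ∈ t, z = x ∨ ∃ m, m ≠ k₁ ∧ z = b m := by
        intro z hz
        rcases hmem z (hmem' z hz).1 with h | rfl | h
        · exact Or.inl h
        · exact absurd rfl (hmem' z hz).2
        · exact Or.inr h
      have hxt : x ∈ t := by
        by_contra hxt
        have hzero : ∀ z ∈ t, c z * B.repr z k₁ = 0 := by
          intro z hzt
          rcases hz z hzt with rfl | ⟨m, hm, rfl⟩
          · exact absurd hzt hxt
          · rw [hrb]; simp [hm]
        have := hco k₁
        rw [Finset.sum_eq_zero hzero, hry] at this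
        exact absurd this hthk1.ne'
      have hcx : th k₁ = c x * lam k₁ := by
        have h := hco k₁
        rw [hry, Finset.sum_eq_single_of_mem x hxt, hrx] at h
        · exact h
        · intro z hzt hzx
          rcases hz z hzt with rfl | ⟨m, hm, rfl⟩
          · exact absurd rfl hzx
          · rw [hrb]; simp [hm]
      have hcx_pos : 0 < c x := by
        rcases lt_or_ge 0 (c x) with h | h
        · exact h
        · nlinarith [hlamk1]
      have hle : c x * lam i0 ≤ ∑ z ∈ t, c z * B.repr z i0 := by
        have : c x * lam i0 = c x * B.repr x i0 := by rw [hrx]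
        rw [this]
        exact Finset.single_le_sum
          (fun z hzt => mul_nonneg (hc z hzt) (hnn z (hmem' z hzt).1 i0)) hxt
      have h := hco i0
      rw [hry, hth0] at h
      nlinarith
    · -- s = b j, j ≠ k₁
      have hz : ∀ z ∈ t, z = x ∨ z = y ∨ ∃ m, m ≠ k₁ ∧ m ≠ j ∧ z = b m := by
        intro z hz
        rcases hmem z (hmem' z hz).1 with h | h | ⟨m, hm, rfl⟩
        · exact Or.inl h
        · exact Or.inr (Or.inl h)
        · refine Or.inr (Or.inr ⟨m, hm, fun hmj => ?_, rfl⟩)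
          exact (hmem' _ hz).2 (by rw [hmj])
      -- coordinate k₁: every term vanishes
      have hsum0 : ∑ z ∈ t, c z * B.repr z k₁ = 0 := by
        have h := hco k₁
        rw [hrb] at h
        simp [hj] at h
        exact h.symm
      have heach : ∀ z ∈ t, c z * B.repr z k₁ = 0 := by
        intro z hzt
        have := (Finset.sum_eq_zero_iff_of_nonneg
          (fun z hzt => mul_nonneg (hc z hzt) (hnn z (hmem' z hzt).1 k₁))).mp hsum0
        exact this z hzt
      -- coordinate j
      have h := hco j
      rw [hrb] at h
      simp at h
      have : ∑ z ∈ t, c z * B.repr z j = 0 := by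
        refine Finset.sum_eq_zero (fun z hzt => ?_)
        rcases hz z hzt with rfl | rfl | ⟨m, hm, hmj, rfl⟩
        · have := heach z hzt
          rw [hrx] at this ⊢
          rcases mul_eq_zero.mp this with h' | h'
          · rw [h']; ring
          · exact absurd h' hlamk1.ne'
        · have := heach z hzt
          rw [hry] at this ⊢
          rcases mul_eq_zero.mp this with h' | h'
          · rw [h']; ring
          · exact absurd h' hthk1.ne'
        · rw [hrb]; simp [hmj]
      rw [this] at h
      norm_num at h
end
end
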